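/- arXiv:1807.06309 — 2 statements merged into one kernel-verified Lean document; each statement's English description precedes it below -/
import Mathlib

section
/- Let α be a symmetric m×m real matrix with entries α_{ij} such that: (1) α_{ij} ≥ 0 for all i ≠ j; (2) for every j, Σ_i α_{ij} ≤ 0; (3) for some j, Σ_i α_{ij} < 0; and (4) for every partition of {1,...,m} into two nonempty sets A, B there exist i ∈ A, j ∈ B with α_{ij} > 0. Then the quadratic form Q(x) = Σ_{i,j} α_{ij} x_i x_j is negative definite. -/
/-- A symmetric real matrix with nonnegative off-diagonal entries,
nonpositive column sums, at least one strictly negative column sum, and a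
connectedness condition, has negative definite quadratic form. -/
theorem stmt_1 (m : ℕ) (hm : 0 < m) (α : Fin m → Fin m → ℝ)
    (hsym : ∀ i j, α i j = α j i)
    (hoff : ∀ i j, i ≠ j → 0 ≤ α i j)
    (hcol : ∀ j, ∑ i, α i j ≤ 0)
    (hstrict : ∃ j, ∑ i, α i j < 0)
    (hconn : ∀ A B : Finset (Fin m), A.Nonempty → B.Nonempty → Disjoint A B →
      A ∪ B = Finset.univ → ∃ i ∈ A, ∃ j ∈ B, 0 < α i j) :
    ∀ x : Fin m → ℝ, x ≠ 0 → ∑ i, ∑ j, α i j * x i * x j < 0 := by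
  intro x hx
  set S : Fin m → ℝ := fun j => ∑ i, α i j with hSdef
  -- each term of the "Laplacian" sum is nonnegative
  have hterm : ∀ i j : Fin m, 0 ≤ α i j * (x i - x j) ^ 2 := by
    intro i j
    rcases eq_or_ne i j with rfl | h
    · simp
    · exact mul_nonneg (hoff i j h) (sq_nonneg _)
  have hD : 0 ≤ ∑ i, ∑ j, α i j * (x i - x j) ^ 2 :=
    Finset.sum_nonneg fun i _ => Finset.sum_nonneg fun j _ => hterm i j
  -- key identity
  have key : ∑ i, ∑ j, α i j * (x i - x j) ^ 2
      = 2 * (∑ j, S j * x j ^ 2) - 2 * ∑ i, ∑ j, α i j * x i * x j := by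
    have expand : ∀ i j : Fin m, α i j * (x i - x j) ^ 2
        = α i j * x i ^ 2 + α i j * x j ^ 2 - 2 * (α i j * x i * x j) := by
      intro i j; ring
    have hA : ∑ i, ∑ j, α i j * x i ^ 2 = ∑ i, S i * x i ^ 2 := by
      refine Finset.sum_congr rfl fun i _ => ?_
      rw [← Finset.sum_mul]
      congr 1
      exact Finset.sum_congr rfl fun j _ => hsym i j
    have hB : ∑ i, ∑ j, α i j * x j ^ 2 = ∑ j, S j * x j ^ 2 := by
      rw [Finset.sum_comm]
      refine Finset.sum_congr rfl fun j _ => ?_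
      rw [← Finset.sum_mul]
    calc ∑ i, ∑ j, α i j * (x i - x j) ^ 2
        = ∑ i, ∑ j, (α i j * x i ^ 2 + α i j * x j ^ 2 - 2 * (α i j * x i * x j)) := by
          simp only [expand]
      _ = (∑ i, ∑ j, α i j * x i ^ 2) + (∑ i, ∑ j, α i j * x j ^ 2)
            - 2 * ∑ i, ∑ j, α i j * x i * x j := by
          simp only [Finset.sum_sub_distrib, Finset.sum_add_distrib, Finset.mul_sum]
      _ = 2 * (∑ j, S j * x j ^ 2) - 2 * ∑ i, ∑ j, α i j * x i * x j := by
          rw [hA, hB]; ring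
  have hSnonpos : ∀ j : Fin m, S j * x j ^ 2 ≤ 0 := fun j =>
    mul_nonpos_iff.mpr (Or.inr ⟨hcol j, sq_nonneg _⟩)
  have hSsum : ∑ j, S j * x j ^ 2 ≤ 0 :=
    Finset.sum_nonpos fun j _ => hSnonpos j
  obtain ⟨j0, hj0⟩ := hstrict
  rcases eq_or_ne (x j0) 0 with h0 | h0
  · -- x j0 = 0, use connectedness to get a strictly positive Laplacian term
    obtain ⟨k, hk⟩ : ∃ k, x k ≠ 0 := Function.ne_iff.mp hx
    set A : Finset (Fin m) := Finset.univ.filter (fun i => x i ≠ 0) with hAdef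
    set B : Finset (Fin m) := Finset.univ.filter (fun i => x i = 0) with hBdef
    have hAne : A.Nonempty := ⟨k, by simp [hAdef, hk]⟩
    have hBne : B.Nonempty := ⟨j0, by simp [hBdef, h0]⟩
    have hdisj : Disjoint A B := by
      rw [Finset.disjoint_left]
      intro a ha hb
      simp [hAdef] at ha
      simp [hBdef] at hb
      exact ha hb
    have hunion : A ∪ B = Finset.univ := by
      ext a
      simp [hAdef, hBdef]
      tauto
    obtain ⟨i, hiA, j, hjB, hpos⟩ := hconn A B hAne hBne hdisj hunion
    have hxi : x i ≠ 0 := by simpa [hAdef] using hiA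
    have hxj : x j = 0 := by simpa [hBdef] using hjB
    have hsq : 0 < (x i - x j) ^ 2 := by
      rw [hxj, sub_zero]
      exact lt_of_le_of_ne (sq_nonneg _) (Ne.symm (pow_ne_zero 2 hxi))
    have hterm_pos : 0 < α i j * (x i - x j) ^ 2 := mul_pos hpos hsq
    have hinner : 0 < ∑ j', α i j' * (x i - x j') ^ 2 := by
      have := Finset.sum_lt_sum (f := fun _ : Fin m => (0 : ℝ))
        (g := fun j' => α i j' * (x i - x j') ^ 2)
        (fun j' _ => hterm i j') ⟨j, Finset.mem_univ j, hterm_pos⟩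
      simpa using this
    have hDpos : 0 < ∑ i', ∑ j', α i' j' * (x i' - x j') ^ 2 := by
      have := Finset.sum_lt_sum (f := fun _ : Fin m => (0 : ℝ))
        (g := fun i' => ∑ j', α i' j' * (x i' - x j') ^ 2)
        (fun i' _ => Finset.sum_nonneg fun j' _ => hterm i' j')
        ⟨i, Finset.mem_univ i, hinner⟩
      simpa using this
    linarith
  · -- x j0 ≠ 0, the column-sum part is strictly negative
    have hneg : S j0 * x j0 ^ 2 < 0 :=
      mul_neg_of_neg_of_pos hj0
        (lt_of_le_of_ne (sq_nonneg _) (Ne.symm (pow_ne_zero 2 h0)))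
    have hSsum' : ∑ j, S j * x j ^ 2 < 0 := by
      have := Finset.sum_lt_sum (f := fun j => S j * x j ^ 2)
        (g := fun _ : Fin m => (0 : ℝ))
        (fun j _ => hSnonpos j) ⟨j0, Finset.mem_univ j0, hneg⟩
      simpa using this
    linarith
end

section
/- Let (R,m) be a Noetherian local ring of dimension d and I, J m-primary ideals with mixed multiplicities e_i(I|J). Then for all positive integers r, s: e(I^r J^s) = Σ_{i=0}^{d} C(d,i)·e_i(I|J)·r^{d−i}·s^i. -/
/-!
Since `(I^r J^s)^n = I^(rn) J^(sn)`, the Bhattacharya polynomial evaluated at `(rn, sn)`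
computes `ℓ(R/(I^r J^s)^n)` for large `n`. Its top-degree part scales exactly by `n^d`, and the
lower-degree remainder is `o(n^d)`, so `ℓ(R/(I^r J^s)^n)/n^d` converges to
`(1/d!) Σ C(d,i) eᵢ r^{d-i} s^i`.
-/

/-- The composition length of an `R`-module `M`, as a real number
(the Krull dimension of its submodule lattice; junk value `0` if infinite). -/
noncomputable def rlen (R : Type*) [Ring R] (M : Type*) [AddCommGroup M] [Module R M] : ℝ :=
  ((WithBot.unbotD 0 (Order.krullDim (Submodule R M))).toNat : ℝ)

open Filter in
/-- The Hilbert–Samuel multiplicity of an ideal `I` in a `d`-dimensional ring: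
`d! · lim_n ℓ(R/Iⁿ)/n^d`. -/
noncomputable def hsMult {R : Type*} [CommRing R] (d : ℕ) (I : Ideal R) : ℝ :=
  (d.factorial : ℝ) * limUnder atTop (fun n : ℕ => rlen R (R ⧸ I ^ n) / (n : ℝ) ^ d)

open Filter Topology Finset

namespace MvPolynomial

variable {σ : Type*}

theorem eval_smul_monomial (c : ℝ) (x : σ → ℝ) (m : σ →₀ ℕ) (a : ℝ) :
    eval (c • x) (monomial m a) = c ^ m.degree * eval x (monomial m a) := by
  simp only [eval_monomial, Finsupp.prod, Pi.smul_apply, smul_eq_mul, mul_pow,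
    prod_mul_distrib, prod_pow_eq_pow_sum, Finsupp.degree_apply]
  exact mul_left_comm _ _ _

theorem eval_smul_eq_sum (c : ℝ) (x : σ → ℝ) (Q : MvPolynomial σ ℝ) :
    eval (c • x) Q = ∑ m ∈ Q.support, eval x (monomial m (Q.coeff m)) * c ^ m.degree := by
  conv_lhs => rw [Q.as_sum]
  simp only [map_sum, eval_smul_monomial, mul_comm]

theorem tendsto_eval_natCast_smul_div_pow_atTop {d : ℕ} {Q : MvPolynomial σ ℝ}
    (hQ : Q.totalDegree < d) (x : σ → ℝ) :
    Tendsto (fun n : ℕ => eval ((n : ℝ) • x) Q / (n : ℝ) ^ d) atTop (𝓝 0) := by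
  simp_rw [eval_smul_eq_sum, sum_div, mul_div_assoc]
  rw [← sum_const_zero (s := Q.support), ← sum_congr rfl fun m _ => mul_zero (eval x
    (monomial m (Q.coeff m)))]
  refine tendsto_finsetSum _ fun m hm => Tendsto.const_mul _ ?_
  have hm_lt : m.degree < d := (le_totalDegree hm).trans_lt hQ
  exact (tendsto_pow_div_pow_atTop_zero hm_lt).comp tendsto_natCast_atTop_atTop

end MvPolynomial

theorem sum_choose_mul_pow_mul_pow_homogeneous (d : ℕ) (e : ℕ → ℝ) (c r s : ℝ) :
    ∑ i ∈ range (d + 1), (d.choose i : ℝ) * e i * (c * r) ^ (d - i) * (c * s) ^ i =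
      c ^ d * ∑ i ∈ range (d + 1), (d.choose i : ℝ) * e i * r ^ (d - i) * s ^ i := by
  rw [mul_sum]
  refine sum_congr rfl fun i hi => ?_
  rw [← Nat.sub_add_cancel (mem_range_succ_iff.mp hi), pow_add, Nat.add_sub_cancel]
  ring

theorem stmt_6_general (R : Type*) [CommRing R]
    (d : ℕ)
    (I J : Ideal R)
    (e : ℕ → ℝ) (Q : MvPolynomial (Fin 2) ℝ) (hQ : Q.totalDegree < d)
    (hP : ∃ N : ℕ, ∀ r ≥ N, ∀ s ≥ N,
      rlen R (R ⧸ (I ^ r * J ^ s)) =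
        (1 / (d.factorial : ℝ)) *
          ∑ i ∈ Finset.range (d + 1),
            (d.choose i : ℝ) * e i * (r : ℝ) ^ (d - i) * (s : ℝ) ^ i +
        MvPolynomial.eval ![(r : ℝ), (s : ℝ)] Q) :
    ∀ r s : ℕ, 0 < r → 0 < s →
      hsMult d (I ^ r * J ^ s) =
        ∑ i ∈ Finset.range (d + 1),
          (d.choose i : ℝ) * e i * (r : ℝ) ^ (d - i) * (s : ℝ) ^ i := by
  intro r s hr hs
  obtain ⟨N, hN⟩ := hP
  set L := ∑ i ∈ range (d + 1), (d.choose i : ℝ) * e i * (r : ℝ) ^ (d - i) * (s : ℝ) ^ i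
    with hL
  have hlen : ∀ n ≥ N + 1,
      L / d.factorial + MvPolynomial.eval ((n : ℝ) • ![(r : ℝ), s]) Q / n ^ d =
        rlen R (R ⧸ (I ^ r * J ^ s) ^ n) / (n : ℝ) ^ d := by
    intro n hn
    have hn_pow : (n : ℝ) ^ d ≠ 0 := pow_ne_zero _ (by norm_cast; omega)
    rw [mul_pow, ← pow_mul', ← pow_mul', hN (n * r) (by nlinarith) (n * s) (by nlinarith)]
    push_cast
    rw [sum_choose_mul_pow_mul_pow_homogeneous, ← hL, Matrix.smul_cons, Matrix.smul_cons,
      Matrix.smul_empty, smul_eq_mul, smul_eq_mul]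
    field_simp
  have hlim : Tendsto (fun n : ℕ => rlen R (R ⧸ (I ^ r * J ^ s) ^ n) / (n : ℝ) ^ d) atTop
      (𝓝 (L / d.factorial)) := by
    simpa using (tendsto_const_nhds.add (MvPolynomial.tendsto_eval_natCast_smul_div_pow_atTop hQ
      _)).congr' ((eventually_ge_atTop (N + 1)).mono hlen)
  rw [hsMult, hlim.limUnder_eq, mul_div_cancel₀ _ (by positivity)]

/-- with mixed multiplicities `eᵢ` given by the Bhattacharya polynomial,
`e(I^r J^s) = Σ_{i=0}^d C(d,i) eᵢ r^{d-i} s^i` for all positive integers `r, s`. -/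
theorem stmt_6 (R : Type*) [CommRing R] [IsNoetherianRing R] [IsLocalRing R]
    (d : ℕ) (hdim : ringKrullDim R = d)
    (I J : Ideal R)
    (hI : I.radical = IsLocalRing.maximalIdeal R)
    (hJ : J.radical = IsLocalRing.maximalIdeal R)
    (e : ℕ → ℝ) (Q : MvPolynomial (Fin 2) ℝ) (hQ : Q.totalDegree < d)
    (hP : ∃ N : ℕ, ∀ r ≥ N, ∀ s ≥ N,
      rlen R (R ⧸ (I ^ r * J ^ s)) =
        (1 / (d.factorial : ℝ)) *
          ∑ i ∈ Finset.range (d + 1),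
            (d.choose i : ℝ) * e i * (r : ℝ) ^ (d - i) * (s : ℝ) ^ i +
        MvPolynomial.eval ![(r : ℝ), (s : ℝ)] Q) :
    ∀ r s : ℕ, 0 < r → 0 < s →
      hsMult d (I ^ r * J ^ s) =
        ∑ i ∈ Finset.range (d + 1),
          (d.choose i : ℝ) * e i * (r : ℝ) ^ (d - i) * (s : ℝ) ^ i :=
  stmt_6_general R d I J e Q hQ hP
end
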